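/- For each k with 0 ≤ k ≤ N−1, the number p^k is an eigenvalue of A_N of multiplicity at least ν^{N−1−k}(ν−1). Consequently, if N_N(λ) = ν^{−N} · (the number of eigenvalues of A_N, counted with multiplicity, that are < λ), then for every λ ∈ (0,1] which is not of the form p^k, N_N(λ) → ν^{−k₀(λ)} as N → ∞, where k₀(λ) = min{k ≥ 0 : p^k < λ}. -/

import Mathlib

noncomputable section
open scoped ENNReal

def HX (ν : ℕ) : Type := {x : ℕ → Fin ν // ∃ N, ∀ n, N ≤ n → (x n : ℕ) = 0}
instance (ν : ℕ) : DecidableEq (HX ν) := Classical.decEq _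
abbrev Hl2 (ν : ℕ) : Type := lp (fun _ : HX ν => ℝ) 2
def cube (ν : ℕ) (r : ℕ) (x : HX ν) : Set (HX ν) := {y | ∀ n, r ≤ n → y.1 n = x.1 n}
def cubeSum (ν r : ℕ) (x : HX ν) (ψ : Hl2 ν) : ℝ := ∑' y : cube ν r x, ψ y
def IsHierLap (ν : ℕ) (p : ℝ) (Δ : Hl2 ν →L[ℝ] Hl2 ν) : Prop :=
  ∀ ψ x, Δ ψ x = ∑' r : ℕ,
    (1 - p) * p ^ r * (((ν : ℝ) ^ (r + 1))⁻¹ * cubeSum ν (r + 1) x ψ - ψ x)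
/-- `k₀(λ) = min {k ≥ 0 : p^k < λ}`. -/
def k0 (p lam : ℝ) : ℕ := sInf {k : ℕ | p ^ k < lam}

/-- The multiplicity of `μ` as an eigenvalue of the compression `A_N = P_N (−Δ_h) P_N`
restricted to the range of `P_N` (functions supported in the cube of rank `N`). -/
def multAN (ν : ℕ) (Δ : Hl2 ν →L[ℝ] Hl2 ν) (P : Hl2 ν →L[ℝ] Hl2 ν) (μ : ℝ) : ℕ :=
  Module.finrank ℝ
    ↥(Module.End.eigenspace ((P.comp ((-Δ).comp P) : Hl2 ν →L[ℝ] Hl2 ν) :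
        Hl2 ν →ₗ[ℝ] Hl2 ν) μ ⊓ LinearMap.range (P : Hl2 ν →ₗ[ℝ] Hl2 ν))

/-!
Identify functions supported in `Q^{(N)}(x₀)` with functions of the first `N` coordinates, i.e. on
`Fin N → Fin ν`. On `Fin ν` use the basis `1, δ_j - δ_0 (j ≠ 0)` and on `Fin N → Fin ν` its tensor
products `haar N g`. Averaging over a cube of rank `r ≤ N` fixes `haar N g` if the first `r`
coordinates of `g` vanish and kills it otherwise (the factor `δ_j - δ_0` has mean zero). Hence
`haar N g` is an eigenvector of `A_N` with eigenvalue `∑_{r > d} a_r = p^d`, where `d` is the first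
index with `g d ≠ 0`; the constant function (`g = 0`) is also averaged over the ranks `r > N`, which
gives the eigenvalue `p^N (ν - 1) / (ν - p) < p^N`. Multiplicities are thus counts of patterns `g`:
`ν^(N-k) - ν^(N-k-1)` have first nonzero index `k`, and the `ν^(N-k₀)` vanishing below `k₀` are
exactly those with eigenvalue `< λ`.
-/

open Finset

theorem Module.End.finrank_eigenspace_inf_span_eq_card {K V ι : Type*} [Field K] [DecidableEq K]
    [AddCommGroup V] [Module K V] [Fintype ι] {f : Module.End K V} {b : ι → V}
    (hb : LinearIndependent K b) {μ : ι → K} (hf : ∀ i, f (b i) = μ i • b i) (a : K) :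
    Module.finrank K ↥(f.eigenspace a ⊓ Submodule.span K (Set.range b)) =
      Fintype.card {i // μ i = a} := by
  suffices h : f.eigenspace a ⊓ Submodule.span K (Set.range b) =
      Submodule.span K (Set.range fun i : {i // μ i = a} => b i) by
    exact h ▸ finrank_span_eq_card (hb.comp _ Subtype.val_injective)
  apply le_antisymm
  · rintro v ⟨hv, hvb⟩
    obtain ⟨c, rfl⟩ := (Submodule.mem_span_range_iff_exists_fun K).1 hvb
    rw [SetLike.mem_coe, Module.End.mem_eigenspace_iff] at hv
    have hc : ∀ i, μ i ≠ a → c i = 0 := by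
      have hzero : ∑ i, ((μ i - a) * c i) • b i = 0 := by
        simp only [sub_mul, sub_smul, sum_sub_distrib, mul_comm (μ _), mul_smul, ← hf,
          ← map_smul, ← map_sum, hv, ← smul_sum, sub_self]
      intro i hi
      exact (mul_eq_zero.1 (Fintype.linearIndependent_iff.1 hb _ hzero i)).resolve_left
        (sub_ne_zero.2 hi)
    refine Submodule.sum_mem _ fun i _ => ?_
    by_cases hi : μ i = a
    · exact Submodule.smul_mem _ _ (Submodule.subset_span ⟨⟨i, hi⟩, rfl⟩)
    · rw [hc i hi, zero_smul]
      exact Submodule.zero_mem _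
  · rw [Submodule.span_le]
    rintro _ ⟨⟨i, hi⟩, rfl⟩
    exact ⟨Module.End.mem_eigenspace_iff.2 (hi ▸ hf i),
      Submodule.subset_span ⟨i, rfl⟩⟩

theorem tsum_card_fiber_lt {ι : Type*} [Fintype ι] (f : ι → ℝ) (c : ℝ) :
    ∑' μ : {μ : ℝ // μ < c}, (Fintype.card {i // f i = μ} : ℝ) = Fintype.card {i // f i < c} := by
  have hfiber : ∀ i, HasSum (fun μ : {μ : ℝ // μ < c} => if f i = μ then (1 : ℝ) else 0)
      (if f i < c then 1 else 0) := by
    intro i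
    split_ifs with hi
    · convert hasSum_ite_eq (⟨f i, hi⟩ : {μ : ℝ // μ < c}) (1 : ℝ) using 2 with μ
      simp only [Subtype.ext_iff, eq_comm]
    · convert hasSum_zero with μ
      exact if_neg fun h : f i = μ => hi (h ▸ μ.2)
  simp only [Fintype.card_subtype, card_filter, Nat.cast_sum, Nat.cast_ite, Nat.cast_one,
    Nat.cast_zero]
  exact (hasSum_sum fun i _ => hfiber i).tsum_eq

theorem hasSum_geometric_tail {p : ℝ} (hp0 : 0 ≤ p) (hp1 : p < 1) (d : ℕ) :
    HasSum (fun r : ℕ => if r < d then 0 else (1 - p) * p ^ r) (p ^ d) := by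
  rw [← hasSum_nat_add_iff' d, sum_eq_zero fun r hr => if_pos (mem_range.1 hr), sub_zero]
  have hval : p ^ d = (1 - p) * p ^ d * (1 - p)⁻¹ := by
    field_simp [(by linarith : (1 : ℝ) - p ≠ 0)]
  rw [hval]
  refine ((hasSum_geometric_of_lt_one hp0 hp1).mul_left _).congr_fun fun s => ?_
  rw [if_neg (by omega), pow_add]
  ring

namespace Matrix

variable {ι α β γ R : Type*} [Fintype ι] [CommSemiring R]

def piKronecker (ι : Type*) [Fintype ι] (M : Matrix α β R) : Matrix (ι → α) (ι → β) R :=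
  of fun g h => ∏ n, M (g n) (h n)

theorem piKronecker_mul [Fintype β] [DecidableEq ι] (M : Matrix α β R) (M' : Matrix β γ R) :
    piKronecker ι M * piKronecker ι M' = piKronecker ι (M * M') := by
  ext g k
  simp only [mul_apply, piKronecker, of_apply, ← prod_mul_distrib]
  exact (Fintype.prod_sum fun n j => M (g n) j * M' j (k n)).symm

theorem piKronecker_one [DecidableEq α] : piKronecker ι (1 : Matrix α α R) = 1 := by
  ext g h
  simp only [piKronecker, of_apply, one_apply]
  split_ifs with hgh
  · simp [hgh]
  · obtain ⟨n, hn⟩ := Function.ne_iff.1 hgh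
    exact prod_eq_zero (mem_univ n) (if_neg hn)

end Matrix

namespace Hierarchical

variable {ν N : ℕ} [NeZero ν]

def haarFactor (ν : ℕ) [NeZero ν] : Matrix (Fin ν) (Fin ν) ℝ :=
  Matrix.of fun j i => if j = 0 then 1 else (Pi.single j 1 - Pi.single 0 1 : Fin ν → ℝ) i

def haarFactorInv (ν : ℕ) [NeZero ν] : Matrix (Fin ν) (Fin ν) ℝ :=
  Matrix.of fun i k => if k = 0 then (ν : ℝ)⁻¹ else (Pi.single k 1 : Fin ν → ℝ) i - (ν : ℝ)⁻¹

theorem haarFactor_zero (i : Fin ν) : haarFactor ν 0 i = 1 := by simp [haarFactor]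

theorem sum_haarFactor (j : Fin ν) : ∑ i, haarFactor ν j i = if j = 0 then (ν : ℝ) else 0 := by
  by_cases hj : j = 0 <;> simp [haarFactor, hj, sum_sub_distrib]

theorem haarFactor_mul_inv : haarFactor ν * haarFactorInv ν = 1 := by
  have hν : (ν : ℝ) ≠ 0 := Nat.cast_ne_zero.2 (NeZero.ne ν)
  ext j k
  by_cases hj : j = 0 <;> by_cases hk : k = 0 <;>
    simp [Matrix.mul_apply, haarFactor, haarFactorInv, hj, hk, sub_mul, sum_sub_distrib,
      Pi.single_apply, hν, Matrix.one_apply, eq_comm]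

def haar (N : ℕ) : (Fin N → Fin ν) → (Fin N → Fin ν) → ℝ :=
  Matrix.piKronecker (Fin N) (haarFactor ν)

theorem linearIndependent_haar : LinearIndependent ℝ (haar (ν := ν) N) := by
  have h : Matrix.piKronecker (Fin N) (haarFactor ν) *
      Matrix.piKronecker (Fin N) (haarFactorInv ν) = 1 := by
    rw [Matrix.piKronecker_mul, haarFactor_mul_inv, Matrix.piKronecker_one]
  exact Matrix.linearIndependent_rows_iff_isUnit.2 (IsUnit.of_mul_eq_one _ h)

theorem span_haar : Submodule.span ℝ (Set.range (haar (ν := ν) N)) = ⊤ :=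
  linearIndependent_haar.span_eq_top_of_card_eq_finrank
    (Module.finrank_fintype_fun_eq_card ℝ).symm

def VanishesBelow (k : ℕ) (g : Fin N → Fin ν) : Prop := ∀ n : Fin N, (n : ℕ) < k → g n = 0

instance (k : ℕ) : DecidablePred (VanishesBelow (ν := ν) (N := N) k) :=
  fun g => inferInstanceAs (Decidable (∀ n : Fin N, (n : ℕ) < k → g n = 0))

-- For `g = 0` the set is empty and `depth g = 0` is a junk value.
def depth (g : Fin N → Fin ν) : ℕ := sInf {k | ∃ h : k < N, g ⟨k, h⟩ ≠ 0}

section depth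

variable {g : Fin N → Fin ν}

theorem nonempty_nonzero_indices (hg : g ≠ 0) : {k | ∃ h : k < N, g ⟨k, h⟩ ≠ 0}.Nonempty := by
  obtain ⟨n, hn⟩ := Function.ne_iff.1 hg
  exact ⟨n, n.isLt, hn⟩

theorem depth_lt (hg : g ≠ 0) : depth g < N :=
  (Nat.sInf_mem (nonempty_nonzero_indices hg)).1

theorem vanishesBelow_iff_le_depth (hg : g ≠ 0) {k : ℕ} : VanishesBelow k g ↔ k ≤ depth g := by
  rw [depth, le_csInf_iff (OrderBot.bddBelow _) (nonempty_nonzero_indices hg)]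
  constructor
  · rintro hk j ⟨hj, hgj⟩
    by_contra! hjk
    exact hgj (hk _ hjk)
  · intro hk n hn
    by_contra hgn
    exact absurd (hk n ⟨n.isLt, hgn⟩) (by omega)

end depth

theorem vanishesBelow_zero_fun (k : ℕ) : VanishesBelow k (0 : Fin N → Fin ν) := fun _ _ => rfl

theorem VanishesBelow.mono {k l : ℕ} {g : Fin N → Fin ν} (h : VanishesBelow l g) (hkl : k ≤ l) :
    VanishesBelow k g := fun n hn => h n (by omega)

theorem card_vanishesBelow (k : ℕ) :
    Fintype.card {g : Fin N → Fin ν // VanishesBelow k g} = ν ^ (N - k) := by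
  have hpi : univ.filter (VanishesBelow (ν := ν) k) =
      Fintype.piFinset fun n : Fin N => if (n : ℕ) < k then {(0 : Fin ν)} else univ := by
    ext g
    simp only [mem_filter, mem_univ, true_and, Fintype.mem_piFinset, VanishesBelow]
    refine forall_congr' fun n => ?_
    split_ifs with hn <;> simp [hn]
  rw [Fintype.card_subtype, hpi, Fintype.card_piFinset]
  simp only [apply_ite card]
  rw [prod_ite]
  simp only [card_singleton, prod_const_one, prod_const, card_univ, Fintype.card_fin, one_mul]
  congr 1
  have := card_filter_add_card_filter_not (s := (univ : Finset (Fin N)))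
    (fun n : Fin N => (n : ℕ) < k)
  rw [Fin.card_filter_val_lt, card_univ, Fintype.card_fin] at this
  omega

theorem card_vanishesBelow_and_not_succ {k : ℕ} (hk : k < N) :
    Fintype.card {g : Fin N → Fin ν // VanishesBelow k g ∧ ¬ VanishesBelow (k + 1) g} =
      ν ^ (N - 1 - k) * (ν - 1) := by
  have hsplit := Fintype.card_subtype_or_disjoint
    (fun g : Fin N → Fin ν => VanishesBelow k g ∧ ¬ VanishesBelow (k + 1) g)
    (VanishesBelow (k + 1)) (Pi.disjoint_iff.2 fun g => Prop.disjoint_iff.2 fun h => h.1.2 h.2)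
  have hor (g : Fin N → Fin ν) :
      (VanishesBelow k g ∧ ¬ VanishesBelow (k + 1) g) ∨ VanishesBelow (k + 1) g ↔
        VanishesBelow k g :=
    ⟨by rintro (h | h); exacts [h.1, h.mono k.le_succ], fun h => by tauto⟩
  rw [Fintype.card_congr (Equiv.subtypeEquivRight hor), card_vanishesBelow,
    card_vanishesBelow, show N - k = N - 1 - k + 1 by omega, pow_succ,
    show N - (k + 1) = N - 1 - k by omega] at hsplit
  rw [Nat.mul_sub_one]
  omega

def groundEigenvalue (ν N : ℕ) (p : ℝ) : ℝ := p ^ N * (ν - 1) / (ν - p)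

def haarEigenvalue (p : ℝ) (g : Fin N → Fin ν) : ℝ :=
  if g = 0 then groundEigenvalue ν N p else p ^ depth g

section eigenvalue

variable {p : ℝ}

theorem groundEigenvalue_lt_pow (hp0 : 0 < p) (hp1 : p < 1) : groundEigenvalue ν N p < p ^ N := by
  have hν : (1 : ℝ) ≤ ν := Nat.one_le_cast.2 (NeZero.one_le)
  rw [groundEigenvalue, div_lt_iff₀ (by linarith)]
  nlinarith [pow_pos hp0 N]

theorem haarEigenvalue_eq_pow_iff (hp0 : 0 < p) (hp1 : p < 1) {k : ℕ} (hk : k < N)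
    (g : Fin N → Fin ν) :
    haarEigenvalue p g = p ^ k ↔ VanishesBelow k g ∧ ¬ VanishesBelow (k + 1) g := by
  by_cases hg : g = 0
  · subst hg
    simp only [haarEigenvalue, if_true, vanishesBelow_zero_fun, not_true, and_false, iff_false]
    exact ((groundEigenvalue_lt_pow hp0 hp1).trans_le
      (pow_le_pow_of_le_one hp0.le hp1.le hk.le)).ne
  · rw [haarEigenvalue, if_neg hg, vanishesBelow_iff_le_depth hg, vanishesBelow_iff_le_depth hg,
      (pow_right_injective₀ hp0 hp1.ne).eq_iff]
    omega

theorem haarEigenvalue_lt_iff (hp0 : 0 < p) (hp1 : p < 1) {lam : ℝ} {k : ℕ} (hk : p ^ k < lam)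
    (hmin : ∀ j < k, lam ≤ p ^ j) (hkN : k ≤ N) (g : Fin N → Fin ν) :
    haarEigenvalue p g < lam ↔ VanishesBelow k g := by
  by_cases hg : g = 0
  · subst hg
    simp only [haarEigenvalue, if_true, vanishesBelow_zero_fun, iff_true]
    exact (groundEigenvalue_lt_pow hp0 hp1).trans_le
      ((pow_le_pow_of_le_one hp0.le hp1.le hkN).trans hk.le)
  · rw [haarEigenvalue, if_neg hg, vanishesBelow_iff_le_depth hg]
    refine ⟨fun h => ?_, fun h => (pow_le_pow_of_le_one hp0.le hp1.le h).trans_lt hk⟩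
    by_contra! hlt
    exact (hmin _ hlt).not_gt h

theorem card_haarEigenvalue_eq_pow (hp0 : 0 < p) (hp1 : p < 1) {k : ℕ} (hk : k < N) :
    Fintype.card {g : Fin N → Fin ν // haarEigenvalue p g = p ^ k} =
      ν ^ (N - 1 - k) * (ν - 1) := by
  rw [Fintype.card_congr (Equiv.subtypeEquivRight (haarEigenvalue_eq_pow_iff hp0 hp1 hk)),
    card_vanishesBelow_and_not_succ hk]

theorem card_haarEigenvalue_lt (hp0 : 0 < p) (hp1 : p < 1) {lam : ℝ} {k : ℕ} (hk : p ^ k < lam)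
    (hmin : ∀ j < k, lam ≤ p ^ j) (hkN : k ≤ N) :
    Fintype.card {g : Fin N → Fin ν // haarEigenvalue p g < lam} = ν ^ (N - k) := by
  rw [Fintype.card_congr (Equiv.subtypeEquivRight (haarEigenvalue_lt_iff hp0 hp1 hk hmin hkN)),
    card_vanishesBelow]

end eigenvalue

end Hierarchical

namespace HX

variable {ν : ℕ}

def init (N : ℕ) (x : HX ν) : Fin N → Fin ν := fun n => x.1 n

def replaceInit (N : ℕ) (g : Fin N → Fin ν) (x : HX ν) : HX ν :=
  ⟨fun n => if h : n < N then g ⟨n, h⟩ else x.1 n, by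
    obtain ⟨M, hM⟩ := x.2
    exact ⟨max N M, fun n hn => by
      simp only [dif_neg (show ¬ n < N by omega)]
      exact hM n (by omega)⟩⟩

variable {N : ℕ}

theorem replaceInit_mem_cube (g : Fin N → Fin ν) (x : HX ν) : replaceInit N g x ∈ cube ν N x :=
  fun _ hn => dif_neg (by omega)

theorem init_replaceInit (g : Fin N → Fin ν) (x : HX ν) : init N (replaceInit N g x) = g :=
  funext fun n => dif_pos n.isLt

theorem replaceInit_init {x y : HX ν} (hy : y ∈ cube ν N x) : replaceInit N (init N y) x = y := by
  refine Subtype.ext (funext fun n => ?_)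
  by_cases hn : n < N
  · exact dif_pos hn
  · exact (dif_neg hn).trans (hy n (by omega)).symm

def cubeEquiv (N : ℕ) (x : HX ν) : (Fin N → Fin ν) ≃ cube ν N x where
  toFun g := ⟨replaceInit N g x, replaceInit_mem_cube g x⟩
  invFun y := init N y
  left_inv g := init_replaceInit g x
  right_inv y := Subtype.ext (replaceInit_init y.2)

theorem replaceInit_mem_cube_iff {r : ℕ} {x₀ x : HX ν} (hx : x ∈ cube ν N x₀)
    (g : Fin N → Fin ν) :
    replaceInit N g x₀ ∈ cube ν r x ↔ ∀ n : Fin N, r ≤ (n : ℕ) → g n = init N x n := by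
  constructor
  · intro h n hn
    simpa [replaceInit, init] using h n hn
  · intro h n hn
    by_cases hnN : n < N
    · exact (dif_pos hnN).trans (h ⟨n, hnN⟩ hn)
    · exact (dif_neg hnN).trans (hx n (by omega)).symm

end HX

namespace Hierarchical

variable {ν N : ℕ}

def embed (N : ℕ) (x₀ : HX ν) : ((Fin N → Fin ν) → ℝ) →ₗ[ℝ] Hl2 ν :=
  Fintype.linearCombination ℝ fun g => lp.single 2 (HX.replaceInit N g x₀) 1

theorem embed_apply (x₀ : HX ν) (f : (Fin N → Fin ν) → ℝ) (y : HX ν) :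
    embed N x₀ f y = (cube ν N x₀).indicator (fun y => f (HX.init N y)) y := by
  rw [embed, Fintype.linearCombination_apply, lp.coeFn_sum, Finset.sum_apply]
  simp only [lp.coeFn_smul, Pi.smul_apply, lp.single_apply, Pi.single_apply, smul_eq_mul,
    mul_ite, mul_one, mul_zero]
  by_cases hy : y ∈ cube ν N x₀
  · rw [Set.indicator_of_mem hy, sum_eq_single (HX.init N y)]
    · exact if_pos (HX.replaceInit_init hy).symm
    · rintro g - hg
      exact if_neg fun h => hg (by rw [h, HX.init_replaceInit])
    · exact fun h => absurd (mem_univ _) h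
  · rw [Set.indicator_of_notMem hy]
    exact sum_eq_zero fun g _ => if_neg fun h : y = _ => hy (h ▸ HX.replaceInit_mem_cube g x₀)

theorem cubeSum_embed {x₀ x : HX ν} (hx : x ∈ cube ν N x₀) (r : ℕ) (f : (Fin N → Fin ν) → ℝ) :
    cubeSum ν r x (embed N x₀ f) =
      ∑ h ∈ Fintype.piFinset (fun n : Fin N => if r ≤ (n : ℕ) then {HX.init N x n} else univ),
        f h := by
  calc cubeSum ν r x (embed N x₀ f)
      = ∑' y, (cube ν N x₀).indicator ((cube ν r x).indicator fun y => f (HX.init N y)) y := by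
        rw [cubeSum, _root_.tsum_subtype, show ⇑(embed N x₀ f) = _ from funext (embed_apply x₀ f),
          Set.indicator_indicator, Set.indicator_indicator, Set.inter_comm]
    _ = ∑ g, (cube ν r x).indicator (fun y => f (HX.init N y)) (HX.replaceInit N g x₀) := by
        rw [← _root_.tsum_subtype, ← (HX.cubeEquiv N x₀).tsum_eq, tsum_fintype]
        rfl
    _ = _ := by
        rw [← univ_inter (Fintype.piFinset _), ← sum_ite_mem]
        refine sum_congr rfl fun g _ => ?_
        classical
        rw [Set.indicator_apply, HX.init_replaceInit]
        refine if_congr ?_ rfl rfl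
        rw [HX.replaceInit_mem_cube_iff hx, Fintype.mem_piFinset]
        refine forall_congr' fun n => ?_
        split_ifs with hn <;> simp [hn]

theorem cubeSum_embed_haar [NeZero ν] {x₀ x : HX ν} (hx : x ∈ cube ν N x₀) (r : ℕ)
    (g : Fin N → Fin ν) :
    cubeSum ν r x (embed N x₀ (haar N g)) =
      if VanishesBelow r g then (ν : ℝ) ^ min N r * haar N g (HX.init N x) else 0 := by
  have hfactor : ∀ n : Fin N,
      ∑ j ∈ (if r ≤ (n : ℕ) then {HX.init N x n} else univ), haarFactor ν (g n) j =
        if r ≤ (n : ℕ) then haarFactor ν (g n) (HX.init N x n)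
        else if g n = 0 then (ν : ℝ) else 0 := by
    intro n
    split_ifs <;> simp_all [sum_haarFactor]
  rw [cubeSum_embed hx]
  simp only [haar, Matrix.piKronecker, Matrix.of_apply]
  rw [← prod_univ_sum, prod_congr rfl fun n _ => hfactor n]
  split_ifs with hg
  · have hsplit : ∀ n : Fin N, (if r ≤ (n : ℕ) then haarFactor ν (g n) (HX.init N x n)
          else if g n = 0 then (ν : ℝ) else 0) =
        (if (n : ℕ) < r then (ν : ℝ) else 1) * haarFactor ν (g n) (HX.init N x n) := by
      intro n
      by_cases hn : (n : ℕ) < r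
      · simp [hn, hg n hn, haarFactor_zero, Nat.not_le.2 hn]
      · simp [hn, Nat.le_of_not_lt hn]
    rw [prod_congr rfl fun n _ => hsplit n, prod_mul_distrib, prod_ite, prod_const, prod_const_one,
      mul_one, Fin.card_filter_val_lt]
  · simp only [VanishesBelow, not_forall] at hg
    obtain ⟨n, hn, hgn⟩ := hg
    exact prod_eq_zero (mem_univ n) (by simp [Nat.not_le.2 hn, hgn])

theorem haar_zero_apply [NeZero ν] (h : Fin N → Fin ν) : haar N 0 h = 1 := by
  simp [haar, Matrix.piKronecker, haarFactor_zero]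

theorem hasSum_groundEigenvalue [NeZero ν] {p : ℝ} (hp0 : 0 ≤ p) (hp1 : p < 1) :
    HasSum (fun r : ℕ => (1 - p) * p ^ r * (((ν : ℝ) ^ (r + 1))⁻¹ * ν ^ min N (r + 1) - 1))
      (-groundEigenvalue ν N p) := by
  have hν1 : (1 : ℝ) ≤ ν := Nat.one_le_cast.2 NeZero.one_le
  have hν : (ν : ℝ) ≠ 0 := by positivity
  have hpν : p / ν < 1 := by
    rw [div_lt_one (by positivity)]
    exact hp1.trans_le hν1
  have hval : -groundEigenvalue ν N p =
      (1 - p) * p ^ N * ((ν : ℝ)⁻¹ * (1 - p / ν)⁻¹ - (1 - p)⁻¹) := by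
    have : (ν : ℝ) - p ≠ 0 := by linarith
    have : (1 : ℝ) - p ≠ 0 := by linarith
    rw [groundEigenvalue]
    field_simp
    ring
  rw [← hasSum_nat_add_iff' N, sum_eq_zero fun r hr => by
    rw [min_eq_right (by simp at hr; omega), inv_mul_cancel₀ (pow_ne_zero _ hν)]; ring,
    sub_zero, hval]
  refine ((((hasSum_geometric_of_lt_one (by positivity) hpν).mul_left (ν : ℝ)⁻¹).sub
    (hasSum_geometric_of_lt_one hp0 hp1)).mul_left _).congr_fun fun s => ?_
  rw [min_eq_left (by omega), div_pow, pow_add, pow_add, pow_succ]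
  field_simp
  ring

theorem laplacian_embed_haar [NeZero ν] {p : ℝ} (hp0 : 0 ≤ p) (hp1 : p < 1)
    {Δ : Hl2 ν →L[ℝ] Hl2 ν} (hΔ : IsHierLap ν p Δ) {x₀ x : HX ν} (hx : x ∈ cube ν N x₀)
    (g : Fin N → Fin ν) :
    Δ (embed N x₀ (haar N g)) x = -(haarEigenvalue p g * haar N g (HX.init N x)) := by
  have hν : (ν : ℝ) ≠ 0 := Nat.cast_ne_zero.2 (NeZero.ne ν)
  have hψ : embed N x₀ (haar N g) x = haar N g (HX.init N x) := by
    rw [embed_apply, Set.indicator_of_mem hx]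
  rw [hΔ]
  refine HasSum.tsum_eq ?_
  simp only [cubeSum_embed_haar hx, hψ]
  by_cases hg : g = 0
  · subst hg
    simp only [vanishesBelow_zero_fun, if_true, haar_zero_apply, mul_one, haarEigenvalue]
    exact hasSum_groundEigenvalue hp0 hp1
  · rw [haarEigenvalue, if_neg hg, neg_mul_eq_mul_neg, mul_comm]
    refine ((hasSum_geometric_tail hp0 hp1 (depth g)).mul_left _).congr_fun fun r => ?_
    have hd := depth_lt hg
    split_ifs with h1 h2 h2 <;> rw [vanishesBelow_iff_le_depth hg] at h1
    · rw [min_eq_right (by omega), inv_mul_cancel_left₀ (pow_ne_zero _ hν)]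
      ring
    · omega
    · omega
    · ring

section compression

variable {x₀ : HX ν} {P : Hl2 ν →L[ℝ] Hl2 ν}

theorem apply_embed (hP : ∀ ψ x, P ψ x = (cube ν N x₀).indicator (fun x' => ψ x') x)
    (f : (Fin N → Fin ν) → ℝ) : P (embed N x₀ f) = embed N x₀ f := by
  ext y
  rw [hP]
  simp only [embed_apply, Set.indicator_indicator, Set.inter_self]

theorem range_eq_span_embed_haar [NeZero ν]
    (hP : ∀ ψ x, P ψ x = (cube ν N x₀).indicator (fun x' => ψ x') x) :
    LinearMap.range (P : Hl2 ν →ₗ[ℝ] Hl2 ν) =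
      Submodule.span ℝ (Set.range (embed N x₀ ∘ haar N)) := by
  have hrange : LinearMap.range (P : Hl2 ν →ₗ[ℝ] Hl2 ν) = LinearMap.range (embed N x₀) := by
    apply le_antisymm
    · rintro _ ⟨φ, rfl⟩
      refine ⟨fun g => φ (HX.replaceInit N g x₀), lp.ext (funext fun y => ?_)⟩
      rw [embed_apply, ContinuousLinearMap.coe_coe, hP]
      exact congrFun (Set.indicator_congr fun y hy => by rw [HX.replaceInit_init hy]) y
    · rintro _ ⟨f, rfl⟩
      exact ⟨embed N x₀ f, apply_embed hP f⟩
  rw [hrange, LinearMap.range_eq_map, ← span_haar, Submodule.map_span, ← Set.range_comp]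

theorem compression_embed_haar [NeZero ν]
    (hP : ∀ ψ x, P ψ x = (cube ν N x₀).indicator (fun x' => ψ x') x) {p : ℝ} (hp0 : 0 ≤ p)
    (hp1 : p < 1) {Δ : Hl2 ν →L[ℝ] Hl2 ν} (hΔ : IsHierLap ν p Δ) (g : Fin N → Fin ν) :
    P.comp ((-Δ).comp P) (embed N x₀ (haar N g)) =
      haarEigenvalue p g • embed N x₀ (haar N g) := by
  ext y
  simp only [ContinuousLinearMap.comp_apply, neg_apply, apply_embed hP,
    lp.coeFn_smul, Pi.smul_apply, smul_eq_mul, hP]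
  by_cases hy : y ∈ cube ν N x₀
  · rw [Set.indicator_of_mem hy, lp.coeFn_neg, Pi.neg_apply, laplacian_embed_haar hp0 hp1 hΔ hy,
      embed_apply, Set.indicator_of_mem hy, neg_neg]
  · rw [Set.indicator_of_notMem hy, embed_apply, Set.indicator_of_notMem hy, mul_zero]

end compression

theorem injective_embed (x₀ : HX ν) : Function.Injective (embed N x₀) := fun f f' h =>
  funext fun g => by
    simpa [embed_apply, HX.replaceInit_mem_cube, HX.init_replaceInit] using
      congrArg (fun ψ : Hl2 ν => ψ (HX.replaceInit N g x₀)) h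

theorem multAN_eq_card [NeZero ν] {p : ℝ} (hp0 : 0 ≤ p) (hp1 : p < 1) {Δ : Hl2 ν →L[ℝ] Hl2 ν}
    (hΔ : IsHierLap ν p Δ) {x₀ : HX ν} {P : Hl2 ν →L[ℝ] Hl2 ν}
    (hP : ∀ ψ x, P ψ x = (cube ν N x₀).indicator (fun x' => ψ x') x) (μ : ℝ) :
    multAN ν Δ P μ = Fintype.card {g : Fin N → Fin ν // haarEigenvalue p g = μ} := by
  rw [multAN, range_eq_span_embed_haar hP]
  exact Module.End.finrank_eigenspace_inf_span_eq_card
    (linearIndependent_haar.map' _ (LinearMap.ker_eq_bot.2 (injective_embed x₀)))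
    (compression_embed_haar hP hp0 hp1 hΔ) μ

end Hierarchical

theorem stmt3 (ν : ℕ) (hν : 2 ≤ ν) (p : ℝ) (hp0 : 0 < p) (hp1 : p < 1)
    (Δ : Hl2 ν →L[ℝ] Hl2 ν) (hΔ : IsHierLap ν p Δ) (x₀ : HX ν)
    (P : ℕ → Hl2 ν →L[ℝ] Hl2 ν)
    (hP : ∀ N (ψ : Hl2 ν) (x : HX ν),
      P N ψ x = (cube ν N x₀).indicator (fun x' => ψ x') x) :
    (∀ N : ℕ, 1 ≤ N → ∀ k : ℕ, k ≤ N - 1 →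
      ν ^ (N - 1 - k) * (ν - 1) ≤ multAN ν Δ (P N) (p ^ k)) ∧
    (∀ lam : ℝ, 0 < lam → lam ≤ 1 → (∀ k : ℕ, lam ≠ p ^ k) →
      Filter.Tendsto
        (fun N : ℕ => ((ν : ℝ) ^ N)⁻¹ *
          ∑' μ : {μ : ℝ // μ < lam}, (multAN ν Δ (P N) μ : ℝ))
        Filter.atTop (nhds ((ν : ℝ)⁻¹ ^ k0 p lam))) := by
  have : NeZero ν := ⟨by omega⟩
  have hmult := fun N => Hierarchical.multAN_eq_card hp0.le hp1 hΔ (hP N)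
  refine ⟨fun N hN k hk => ?_, fun lam hlam _ _ => ?_⟩
  · rw [hmult, Hierarchical.card_haarEigenvalue_eq_pow hp0 hp1 (by omega)]
  · have hk0 : {k | p ^ k < lam}.Nonempty := exists_pow_lt_of_lt_one hlam hp1
    have hlt : p ^ k0 p lam < lam := Nat.sInf_mem hk0
    have hmin : ∀ j < k0 p lam, lam ≤ p ^ j := fun j hj => not_lt.1 (Nat.notMem_of_lt_sInf hj)
    refine tendsto_atTop_of_eventually_const (i₀ := k0 p lam) fun N hN => ?_
    simp only [hmult, tsum_card_fiber_lt, Hierarchical.card_haarEigenvalue_lt hp0 hp1 hlt hmin hN]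
    rw [← Nat.sub_add_cancel hN]
    push_cast
    rw [Nat.add_sub_cancel, pow_add, mul_inv, inv_pow]
    field_simp
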